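/- arXiv:1502.07281 — 3 statements merged into one kernel-verified Lean document; each statement's English description precedes it below -/
import Mathlib

section
/- Let p ≥ 5 be a prime and let d₁, d₂ be distinct integers with 1 ≤ d₁, d₂ ≤ p−2. Then there exist nonnegative integers j₁, j₂ with 0 ≤ j₁, j₂ < p, (j₁, j₂) ≠ (0, 0), such that d₁·j₁ + d₂·j₂ ≡ 0 (mod p−1) and j₁ + j₂ ≤ (p−1)/2. -/
/-!
Write `n = p - 1`, which is even. If `d₁` shares a factor `g > 1` with `n`, then `(n / g, 0)` is a
short relation, and likewise for `d₂`. Otherwise both `dᵢ` are odd units mod `n`, and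
`d₁ e ≡ d₂` for some `e` with `2 ≤ e < n` (`e = 1` would mean `d₁ = d₂`). Every `j` with
`e j ≤ n` gives the relation `(n - e j, j)`; taking `j` minimal with `e j > n / 2` lands it in the
square `[0, n/2]²`. Since `d₁ + d₂` is even, `(n/2, n/2)` is a relation too, so `(a, b) ↦
(n/2 - a, n/2 - b)` maps relations in that square to relations, and it exchanges the two triangles
`a + b ≤ n/2` and `a + b ≥ n/2`.
-/

theorem exists_mul_modEq_of_coprime {n a : ℕ} (b : ℕ) (hn : 1 < n) (h : a.Coprime n) :
    ∃ e < n, a * e ≡ b [MOD n] := by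
  obtain ⟨c, -, hc⟩ := Nat.exists_mul_mod_eq_one_of_coprime h hn
  refine ⟨b * c % n, Nat.mod_lt _ (by omega), ?_⟩
  calc a * (b * c % n) ≡ a * (b * c) [MOD n] := (Nat.mod_modEq _ _).mul_left a
    _ = b * (a * c) := by ring
    _ ≡ b * 1 [MOD n] := (hc ▸ (Nat.mod_modEq (a * c) n).symm).mul_left b
    _ = b := mul_one b

theorem dvd_mul_sub_add_of_mul_modEq {n d₁ d₂ e j : ℕ} (h : d₁ * e ≡ d₂ [MOD n])
    (hj : e * j ≤ n) : n ∣ d₁ * (n - e * j) + d₂ * j := by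
  refine Nat.modEq_zero_iff_dvd.mp ?_
  calc d₁ * (n - e * j) + d₂ * j ≡ d₁ * (n - e * j) + d₁ * e * j [MOD n] :=
        ((h.mul_right j).symm).add_left _
    _ = n * d₁ := by rw [mul_assoc, ← mul_add, Nat.sub_add_cancel hj, mul_comm]
    _ ≡ 0 [MOD n] := Nat.modEq_zero_iff_dvd.mpr (dvd_mul_right n d₁)

theorem exists_half_lt_mul_le {n e : ℕ} (he : 2 ≤ e) (hen : e < n) :
    ∃ j, 0 < j ∧ j ≤ n / 2 ∧ n / 2 < e * j ∧ e * j ≤ n := by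
  set q := n / 2 / e
  have hlt : n / 2 < e * (q + 1) := Nat.lt_mul_div_succ _ (by omega)
  have hle : e * q ≤ n / 2 := Nat.mul_div_le _ _
  have hq : 2 * q ≤ e * q := Nat.mul_le_mul_right q he
  rcases Nat.eq_zero_or_pos q with hq₀ | hq₀
  · exact ⟨1, by omega, by omega, by simpa [hq₀] using hlt, by omega⟩
  · have : e ≤ e * q := Nat.le_mul_of_pos_right e hq₀
    refine ⟨q + 1, by omega, by omega, hlt, ?_⟩
    rw [mul_add_one]
    omega

def HasShortRelation (n d₁ d₂ : ℕ) : Prop :=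
  ∃ j₁ j₂ : ℕ, (j₁, j₂) ≠ (0, 0) ∧ n ∣ d₁ * j₁ + d₂ * j₂ ∧ j₁ + j₂ ≤ n / 2

namespace HasShortRelation

variable {n d₁ d₂ : ℕ}

theorem symm (h : HasShortRelation n d₁ d₂) : HasShortRelation n d₂ d₁ := by
  obtain ⟨j₁, j₂, h₀, hdvd, hsum⟩ := h
  exact ⟨j₂, j₁, by simpa [and_comm] using h₀, by rwa [add_comm], by omega⟩

theorem of_not_coprime (hn : 0 < n) (h : ¬ d₁.Coprime n) : HasShortRelation n d₁ d₂ := by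
  set g := d₁.gcd n
  have hg : 2 ≤ g := by
    have hg₀ : 0 < g := Nat.gcd_pos_of_pos_right d₁ hn
    have hg₁ : g ≠ 1 := h
    omega
  have hdvd : n ∣ d₁ * (n / g) :=
    calc n = n / g * g := (Nat.div_mul_cancel (Nat.gcd_dvd_right d₁ n)).symm
      _ ∣ n / g * d₁ := mul_dvd_mul_left _ (Nat.gcd_dvd_left d₁ n)
      _ = d₁ * (n / g) := mul_comm _ _
  have hpos : 0 < n / g := Nat.div_pos (Nat.gcd_le_right (m := d₁) hn) (by omega)
  have hle : n / g ≤ n / 2 := Nat.div_le_div_left hg (by norm_num)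
  exact ⟨n / g, 0, by simp [hpos.ne'], by simpa using hdvd, by simpa using hle⟩

theorem of_dvd_of_le_half (hn : Even n) (hd : Even (d₁ + d₂)) {a b : ℕ} (ha : a < n / 2)
    (hb₀ : 0 < b) (hb : b ≤ n / 2) (h : n ∣ d₁ * a + d₂ * b) : HasShortRelation n d₁ d₂ := by
  by_cases hab : a + b ≤ n / 2
  · exact ⟨a, b, by simp [hb₀.ne'], h, hab⟩
  refine ⟨n / 2 - a, n / 2 - b, by simp [Nat.sub_ne_zero_of_lt ha], ?_, by omega⟩
  have hcenter : n ∣ (d₁ + d₂) * (n / 2) := by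
    obtain ⟨k, hk⟩ := hd
    refine ⟨k, ?_⟩
    calc (d₁ + d₂) * (n / 2) = k * (2 * (n / 2)) := by rw [hk]; ring
      _ = n * k := by rw [Nat.two_mul_div_two_of_even hn, mul_comm]
  have hsplit :
      d₁ * (n / 2 - a) + d₂ * (n / 2 - b) + (d₁ * a + d₂ * b) = (d₁ + d₂) * (n / 2) := by
    zify [ha.le, hb]
    ring
  exact (Nat.dvd_add_left h).mp (hsplit ▸ hcenter)

theorem of_coprime (hn : Even n) (hn₁ : 1 < n) (h₁ : d₁.Coprime n) (h₂ : d₂.Coprime n)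
    (hne : ¬ d₁ ≡ d₂ [MOD n]) : HasShortRelation n d₁ d₂ := by
  have hodd : ∀ {d : ℕ}, d.Coprime n → Odd d := fun h ↦
    (h.coprime_dvd_right hn.two_dvd).odd_of_right
  obtain ⟨e, hen, he⟩ := exists_mul_modEq_of_coprime d₂ hn₁ h₁
  have he₀ : e ≠ 0 := by
    rintro rfl
    have hdvd : n ∣ d₂ := Nat.modEq_zero_iff_dvd.mp (by simpa using he.symm)
    have := Nat.Coprime.eq_one_of_dvd h₂.symm hdvd
    omega
  have he₁ : e ≠ 1 := by
    rintro rfl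
    exact hne (by simpa using he)
  obtain ⟨j, hj₀, hj, hlt, hle⟩ := exists_half_lt_mul_le (by omega) hen
  have ha : n - e * j < n / 2 := by
    have := Nat.even_iff.mp hn
    omega
  exact of_dvd_of_le_half hn ((hodd h₁).add_odd (hodd h₂)) ha hj₀ hj
    (dvd_mul_sub_add_of_mul_modEq he hle)

theorem of_ne (hn : Even n) (hd₁ : 0 < d₁) (hd₁n : d₁ < n) (hd₂ : 0 < d₂) (hd₂n : d₂ < n)
    (hne : d₁ ≠ d₂) : HasShortRelation n d₁ d₂ := by
  by_cases h₁ : d₁.Coprime n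
  · by_cases h₂ : d₂.Coprime n
    · refine of_coprime hn (by omega) h₁ h₂ fun h ↦ hne ?_
      rwa [Nat.ModEq, Nat.mod_eq_of_lt hd₁n, Nat.mod_eq_of_lt hd₂n] at h
    · exact (of_not_coprime (by omega) h₂).symm
  · exact of_not_coprime (by omega) h₁

end HasShortRelation

theorem stmt_0_general (p : ℕ) (hp : p.Prime)
    (d₁ d₂ : ℕ) (hd₁ : 1 ≤ d₁) (hd₁' : d₁ ≤ p - 2)
    (hd₂ : 1 ≤ d₂) (hd₂' : d₂ ≤ p - 2) (hne : d₁ ≠ d₂) :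
    ∃ j₁ j₂ : ℕ, j₁ < p ∧ j₂ < p ∧ (j₁, j₂) ≠ (0, 0) ∧
      (p - 1) ∣ (d₁ * j₁ + d₂ * j₂) ∧ j₁ + j₂ ≤ (p - 1) / 2 := by
  obtain ⟨j₁, j₂, h₀, hdvd, hsum⟩ :=
    HasShortRelation.of_ne (hp.even_sub_one (by omega)) hd₁ (by omega) hd₂ (by omega) hne
  exact ⟨j₁, j₂, by omega, by omega, h₀, hdvd, hsum⟩

theorem stmt_0 (p : ℕ) (hp : p.Prime) (hp5 : 5 ≤ p)
    (d₁ d₂ : ℕ) (hd₁ : 1 ≤ d₁) (hd₁' : d₁ ≤ p - 2)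
    (hd₂ : 1 ≤ d₂) (hd₂' : d₂ ≤ p - 2) (hne : d₁ ≠ d₂) :
    ∃ j₁ j₂ : ℕ, j₁ < p ∧ j₂ < p ∧ (j₁, j₂) ≠ (0, 0) ∧
      (p - 1) ∣ (d₁ * j₁ + d₂ * j₂) ∧ j₁ + j₂ ≤ (p - 1) / 2 :=
  stmt_0_general p hp d₁ d₂ hd₁ hd₁' hd₂ hd₂' hne
end

section
/- Let p ≥ 5 be prime and let d₁, d₂ be odd integers with 1 ≤ d₁ ≠ d₂ ≤ p−2 and gcd(d₁, p−1) = gcd(d₂, p−1) = 1. Then there exist integers i, j with 0 ≤ i, j ≤ (p−1)/2, (i, j) ≠ (0, 0), such that d₁·i + d₂·j ≡ 0 (mod p−1) and i + j ≤ (p−1)/2. -/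
/-!
Solutions of `d₁ i + d₂ j ≡ 0 (mod n)` come from `(1, j₀)` with `j₀ ≡ -d₁/d₂`, and `j₀ ≤ n - 2`
because `j₀ = n - 1` would force `d₁ = d₂`. Doubling `(i, j) ↦ (2i, 2j - n)` keeps the congruence
and the bound `2i + j ≤ n` while `j` decreases, until `2j ≤ n`. If then `i + j > n/2`, the
reflection `(i, j) ↦ (n/2 - i, n/2 - j)` fixes the sum, since `n ∣ (d₁ + d₂) · n/2` when
`d₁ + d₂` is even.
-/

lemma exists_lt_dvd_add_mul_of_coprime {n : ℕ} [NeZero n] (a : ℕ) {b : ℕ} (hb : b.Coprime n) :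
    ∃ j < n, n ∣ a + b * j := by
  refine ⟨((b : ZMod n)⁻¹ * -a).val, ZMod.val_lt _, ?_⟩
  rw [← ZMod.natCast_eq_zero_iff]
  push_cast
  rw [ZMod.natCast_zmod_val, ← mul_assoc, ZMod.coe_mul_inv_eq_one b hb, one_mul, add_neg_cancel]

lemma eq_of_dvd_add_mul_pred {n a b : ℕ} (ha : a < n) (hb : b < n) (h : n ∣ a + b * (n - 1)) :
    a = b := by
  have hcast : ((a + b * (n - 1) : ℕ) : ZMod n) = a - b := by
    push_cast [Nat.one_le_of_lt ha]
    rw [ZMod.natCast_self]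
    ring
  rw [(ZMod.natCast_eq_zero_iff _ _).mpr h, eq_comm, sub_eq_zero,
    ZMod.natCast_eq_natCast_iff'] at hcast
  rwa [Nat.mod_eq_of_lt ha, Nat.mod_eq_of_lt hb] at hcast

lemma dvd_mul_add_mul_double {n a b i j : ℕ} (hj : n ≤ 2 * j) (h : n ∣ a * i + b * j) :
    n ∣ a * (2 * i) + b * (2 * j - n) := by
  have key : a * (2 * i) + b * (2 * j - n) + b * n = 2 * (a * i + b * j) := by
    zify [hj]
    ring
  exact (Nat.dvd_add_left (dvd_mul_left n b)).mp (key ▸ h.mul_left 2)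

lemma dvd_mul_add_mul_reflect {m a b i j : ℕ} (hab : Even (a + b)) (hi : i ≤ m) (hj : j ≤ m)
    (h : 2 * m ∣ a * i + b * j) : 2 * m ∣ a * (m - i) + b * (m - j) := by
  obtain ⟨k, hk⟩ := hab
  have key : a * (m - i) + b * (m - j) + (a * i + b * j) = 2 * m * k := by
    zify [hi, hj] at hk ⊢
    linear_combination m * hk
  exact (Nat.dvd_add_left h).mp (key ▸ dvd_mul_right _ _)

lemma exists_dvd_mul_add_mul_two_mul_le {n a b i j : ℕ} (hi : 0 < i) (hij : 2 * i + j ≤ n)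
    (h : n ∣ a * i + b * j) :
    ∃ i' j', 0 < i' ∧ 2 * i' + j' ≤ n ∧ 2 * j' ≤ n ∧ n ∣ a * i' + b * j' := by
  induction j using Nat.strong_induction_on generalizing i with
  | _ j ih =>
    by_cases hj : 2 * j ≤ n
    · exact ⟨i, j, hi, hij, hj, h⟩
    · exact ih (2 * j - n) (by omega) (i := 2 * i) (by omega) (by omega)
        (dvd_mul_add_mul_double (by omega) h)

theorem exists_add_le_half_dvd_mul_add_mul {m d₁ d₂ : ℕ} (hodd₁ : Odd d₁) (hodd₂ : Odd d₂)
    (hd₁ : d₁ < 2 * m) (hd₂ : d₂ < 2 * m) (hne : d₁ ≠ d₂) (hcop : d₂.Coprime (2 * m)) :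
    ∃ i j : ℕ, i ≤ m ∧ j ≤ m ∧ (i, j) ≠ (0, 0) ∧ 2 * m ∣ d₁ * i + d₂ * j ∧ i + j ≤ m := by
  have : NeZero (2 * m) := ⟨by omega⟩
  obtain ⟨j₀, hj₀, h₀⟩ := exists_lt_dvd_add_mul_of_coprime d₁ hcop
  have hj₀' : j₀ ≠ 2 * m - 1 := fun h => hne (eq_of_dvd_add_mul_pred hd₁ hd₂ (h ▸ h₀))
  obtain ⟨i, j, hi, hij, hj, h⟩ :=
    exists_dvd_mul_add_mul_two_mul_le one_pos (by omega) ((mul_one d₁).symm ▸ h₀)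
  by_cases hsum : i + j ≤ m
  · exact ⟨i, j, by omega, by omega, by simp [hi.ne'], h, hsum⟩
  · refine ⟨m - i, m - j, by omega, by omega, ?_,
      dvd_mul_add_mul_reflect (hodd₁.add_odd hodd₂) (by omega) (by omega) h, by omega⟩
    simp only [ne_eq, Prod.mk.injEq, not_and]
    omega

theorem stmt_9_general (p : ℕ) (hp : p.Prime) (hp5 : 5 ≤ p)
    (d₁ d₂ : ℕ) (hodd₁ : Odd d₁) (hodd₂ : Odd d₂)
    (hd₁' : d₁ ≤ p - 2) (hd₂' : d₂ ≤ p - 2)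
    (hne : d₁ ≠ d₂)
    (hg₂ : Nat.gcd d₂ (p - 1) = 1) :
    ∃ i j : ℕ, i ≤ (p - 1) / 2 ∧ j ≤ (p - 1) / 2 ∧ (i, j) ≠ (0, 0) ∧
      (p - 1) ∣ (d₁ * i + d₂ * j) ∧ i + j ≤ (p - 1) / 2 := by
  obtain ⟨m, hm⟩ := hp.odd_of_ne_two (by omega)
  have hn : p - 1 = 2 * m := by omega
  rw [hn, Nat.mul_div_cancel_left m two_pos]
  exact exists_add_le_half_dvd_mul_add_mul hodd₁ hodd₂ (by omega) (by omega) hne (hn ▸ hg₂)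

theorem stmt_9 (p : ℕ) (hp : p.Prime) (hp5 : 5 ≤ p)
    (d₁ d₂ : ℕ) (hodd₁ : Odd d₁) (hodd₂ : Odd d₂)
    (hd₁ : 1 ≤ d₁) (hd₁' : d₁ ≤ p - 2) (hd₂ : 1 ≤ d₂) (hd₂' : d₂ ≤ p - 2)
    (hne : d₁ ≠ d₂)
    (hg₁ : Nat.gcd d₁ (p - 1) = 1) (hg₂ : Nat.gcd d₂ (p - 1) = 1) :
    ∃ i j : ℕ, i ≤ (p - 1) / 2 ∧ j ≤ (p - 1) / 2 ∧ (i, j) ≠ (0, 0) ∧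
      (p - 1) ∣ (d₁ * i + d₂ * j) ∧ i + j ≤ (p - 1) / 2 :=
  stmt_9_general p hp hp5 d₁ d₂ hodd₁ hodd₂ hd₁' hd₂' hne hg₂
end

section
/- Let n be an even positive integer and let j be an integer with 1 ≤ j ≤ n−2. Then there exists an integer k ≥ 0 such that the residue of 2^k·j modulo n, taken in [0, n−1], is at most n/2, and moreover 2^k ≤ n/2 can be chosen. -/
/-! Put m = n - j, so that 2^k j ≡ -2^k m (mod n). If j ≤ n/2 take k = 0. Otherwise
2 ≤ m < ⌈n/2⌉, and doubling m until it first reaches ⌈n/2⌉ gives ⌈n/2⌉ ≤ 2^k m < 2⌈n/2⌉ ≤ n + 1.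
Then 2^k j mod n = n - 2^k m ≤ ⌊n/2⌋, and 2^k ≤ 2^k m / 2 < ⌈n/2⌉ gives 2^k ≤ ⌊n/2⌋. -/

theorem Nat.exists_le_two_pow_mul_lt_two_mul {c m : ℕ} (hm : 0 < m) (hmc : m < 2 * c) :
    ∃ k, c ≤ 2 ^ k * m ∧ 2 ^ k * m < 2 * c := by
  by_cases hcm : c ≤ m
  · exact ⟨0, by simpa using hcm, by simpa using hmc⟩
  · obtain ⟨k, hk⟩ := Nat.exists_le_two_pow_mul_lt_two_mul (c := c) (m := 2 * m) (by omega) (by omega)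
    exact ⟨k + 1, by rwa [pow_succ, mul_assoc]⟩
termination_by 2 * c - m

theorem Nat.mod_eq_sub_of_add_eq_mul {a b q n : ℕ} (hb : 0 < b) (hbn : b ≤ n)
    (h : a + b = q * n) : a % n = n - b := by
  have hmod : a + b ≡ n - b + b [MOD n] := by
    rw [Nat.sub_add_cancel hbn, h, Nat.ModEq, Nat.mul_mod_left, Nat.mod_self]
  rw [Nat.ModEq.add_right_cancel' b hmod, Nat.mod_eq_of_lt (by omega)]

theorem stmt_15_general (n : ℕ)
    (j : ℕ) (hj1 : 1 ≤ j) (hj2 : j ≤ n - 2) :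
    ∃ k : ℕ, (2 ^ k * j) % n ≤ n / 2 ∧ 2 ^ k ≤ n / 2 := by
  by_cases hj : j ≤ n / 2
  · exact ⟨0, by rwa [pow_zero, one_mul, Nat.mod_eq_of_lt (by omega)], by omega⟩
  obtain ⟨k, hlo, hhi⟩ :=
    Nat.exists_le_two_pow_mul_lt_two_mul (c := n - n / 2) (m := n - j) (by omega) (by omega)
  have hsum : 2 ^ k * j + 2 ^ k * (n - j) = 2 ^ k * n := by
    rw [← mul_add, Nat.add_sub_cancel' (by omega)]
  have hpos : 0 < 2 ^ k * (n - j) := Nat.mul_pos (by positivity) (by omega)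
  refine ⟨k, ?_, ?_⟩
  · rw [Nat.mod_eq_sub_of_add_eq_mul hpos (by omega) hsum]
    omega
  · have := Nat.mul_le_mul_left (2 ^ k) (show 2 ≤ n - j by omega)
    omega

theorem stmt_15 (n : ℕ) (hn : 0 < n) (heven : Even n)
    (j : ℕ) (hj1 : 1 ≤ j) (hj2 : j ≤ n - 2) :
    ∃ k : ℕ, (2 ^ k * j) % n ≤ n / 2 ∧ 2 ^ k ≤ n / 2 :=
  stmt_15_general n j hj1 hj2
end
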